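/- Let T be a left-invertible operator on a Hilbert space with polar decomposition T = U|T| and Cauchy dual T'. Then the restriction of T' to the closure of its range is hyponormal if and only if |T|^{-1}U is hyponormal. -/

import Mathlib

/-!
Left-invertibility of `T = U M` together with `M * M = T* T` and `M = M*` forces `M` to be
invertible and `U` to be an isometry, so `T' = U M⁻¹`, `T'* T' = M⁻²` and the range projection
of `T'` is `U U*`. For `N = M⁻¹ U` this gives `‖P T'* (T' x)‖ = ‖U* M⁻² x‖ = ‖N* (M⁻¹ x)‖` and
`‖T' (T' x)‖ = ‖N (M⁻¹ x)‖`; as `M⁻¹` is onto, the two sides of the equivalence say the same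
thing about all vectors, and hyponormality of `N` is exactly `‖N* y‖ ≤ ‖N y‖` for all `y`.
-/

open ContinuousLinearMap

/-- The Cauchy dual `T' = T (T*T)⁻¹` of a left-invertible operator. -/
noncomputable def cauchyDual {H : Type*} [NormedAddCommGroup H] [InnerProductSpace ℂ H]
    [CompleteSpace H] (T : H →L[ℂ] H) : H →L[ℂ] H :=
  T * Ring.inverse (adjoint T * T)

section StarMonoid

variable {R : Type*} [Monoid R] [StarMul R]

theorem IsSelfAdjoint.isUnit_of_mul_eq_one {a b : R} (ha : IsSelfAdjoint a) (h : b * a = 1) :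
    IsUnit a := by
  refine isUnit_iff_exists_and_exists.mpr ⟨⟨star b, ?_⟩, ⟨b, h⟩⟩
  rw [← ha.star_eq, ← star_mul, h, star_one]

theorem star_mul_self_eq_one_of_eq_mul {T U M : R} (hM : IsSelfAdjoint M) (hMu : IsUnit M)
    (hM2 : M * M = star T * T) (hpolar : T = U * M) : star U * U = 1 := by
  apply hMu.mul_left_cancel
  apply hMu.mul_right_cancel
  calc M * (star U * U) * M = star T * T := by
        rw [hpolar, star_mul, hM.star_eq]; simp only [mul_assoc]
    _ = M * 1 * M := by rw [← hM2, mul_one]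

end StarMonoid

section StarRing

variable {R : Type*} [Semiring R] [StarRing R]

theorem mul_ringInverse_star_mul_self_of_eq_mul {T U M : R} (hMu : IsUnit M)
    (hM2 : M * M = star T * T) (hpolar : T = U * M) :
    T * Ring.inverse (star T * T) = U * Ring.inverse M := by
  rw [← hM2, Ring.mul_inverse_rev' (Commute.refl M), hpolar, mul_assoc U, ← mul_assoc M,
    Ring.mul_inverse_cancel M hMu, one_mul]

theorem star_mul_mul_self_of_star_mul_self_eq_one {U A : R} (hU : star U * U = 1)
    (hA : IsSelfAdjoint A) : star (U * A) * (U * A) = A * A := by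
  rw [star_mul, hA.star_eq, mul_assoc, ← mul_assoc (star U), hU, one_mul]

theorem mul_ringInverse_star_mul_self_mul_star_of_star_mul_self_eq_one {U A : R}
    (hU : star U * U = 1) (hA : IsSelfAdjoint A) (hAu : IsUnit A) :
    U * A * Ring.inverse (star (U * A) * (U * A)) * star (U * A) = U * star U := by
  rw [star_mul_mul_self_of_star_mul_self_eq_one hU hA, Ring.mul_inverse_rev' (Commute.refl A),
    star_mul, hA.star_eq]
  simp only [mul_assoc]
  rw [← mul_assoc A, Ring.mul_inverse_cancel A hAu, one_mul, ← mul_assoc (Ring.inverse A),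
    Ring.inverse_mul_cancel A hAu, one_mul]

end StarRing

namespace ContinuousLinearMap

variable {𝕜 H : Type*} [RCLike 𝕜] [NormedAddCommGroup H] [InnerProductSpace 𝕜 H]
  [CompleteSpace H]

theorem isPositive_star_mul_self_sub_mul_star_iff (N : H →L[𝕜] H) :
    (star N * N - N * star N).IsPositive ↔ ∀ x, ‖star N x‖ ≤ ‖N x‖ := by
  have hre : ∀ x, (star N * N - N * star N).reApplyInnerSelf x
      = ‖N x‖ ^ 2 - ‖star N x‖ ^ 2 := fun x => by
    rw [reApplyInnerSelf_apply, sub_apply, inner_sub_left, map_sub, star_eq_adjoint,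
      apply_norm_sq_eq_inner_adjoint_left, apply_norm_sq_eq_inner_adjoint_left, adjoint_adjoint]
    rfl
  have hsa : IsSelfAdjoint (star N * N - N * star N) :=
    (IsSelfAdjoint.star_mul_self N).sub (IsSelfAdjoint.mul_star_self N)
  simp only [isPositive_def', hsa, true_and, hre, sub_nonneg]
  exact forall_congr' fun x => sq_le_sq₀ (norm_nonneg _) (norm_nonneg _)

end ContinuousLinearMap

/-- Hyponormality of `T'` restricted to the closure of its range is encoded as
`‖P T'^* y‖ ≤ ‖T' y‖` for every `y = T' x`, where `P = T' (T'^* T')⁻¹ T'^*` is the orthogonal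
projection onto the range of `T'`. -/
theorem stmt_18 {H : Type*} [NormedAddCommGroup H] [InnerProductSpace ℂ H] [CompleteSpace H]
    (T U M : H →L[ℂ] H)
    (hli : ∃ L : H →L[ℂ] H, L * T = 1)
    (hM : M.IsPositive) (hM2 : M * M = adjoint T * T) (hpolar : T = U * M) :
    ((∀ x : H,
        ‖(cauchyDual T * Ring.inverse (adjoint (cauchyDual T) * cauchyDual T)
            * adjoint (cauchyDual T)) (adjoint (cauchyDual T) (cauchyDual T x))‖
          ≤ ‖cauchyDual T (cauchyDual T x)‖) ↔
      (adjoint (Ring.inverse M * U) * (Ring.inverse M * U)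
        - (Ring.inverse M * U) * adjoint (Ring.inverse M * U)).IsPositive) := by
  obtain ⟨L, hL⟩ := hli
  rw [← star_eq_adjoint] at hM2
  have hMu : IsUnit M :=
    hM.isSelfAdjoint.isUnit_of_mul_eq_one (b := L * U) (by rw [mul_assoc, ← hpolar, hL])
  have hU : star U * U = 1 := star_mul_self_eq_one_of_eq_mul hM.isSelfAdjoint hMu hM2 hpolar
  have hUnorm : ∀ y, ‖U y‖ = ‖y‖ := (norm_map_iff_adjoint_comp_self U).mpr hU
  have hMinv_sa := hM.isSelfAdjoint.ringInverse
  have hdual : cauchyDual T = U * Ring.inverse M := by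
    rw [cauchyDual, ← star_eq_adjoint, mul_ringInverse_star_mul_self_of_eq_mul hMu hM2 hpolar]
  have hsurj : Function.Surjective ⇑(Ring.inverse M) :=
    (isUnit_iff_bijective.mp hMu.ringInverse).surjective
  simp only [← star_eq_adjoint, hdual,
    mul_ringInverse_star_mul_self_mul_star_of_star_mul_self_eq_one hU hMinv_sa hMu.ringInverse]
  rw [isPositive_star_mul_self_sub_mul_star_iff]
  refine (forall_congr' fun x => ?_).trans hsurj.forall.symm
  rw [← mul_apply_eq_comp (star (U * Ring.inverse M)),
    star_mul_mul_self_of_star_mul_self_eq_one hU hMinv_sa]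
  simp only [mul_apply_eq_comp, hUnorm, star_mul, hMinv_sa.star_eq]
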